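/- arXiv:2402.00258 — 5 statements merged into one kernel-verified Lean document; each statement's English description precedes it below -/
import Mathlib

section
/- Let G be a finite hierarchically structured collection of measurable groups arranged as a rooted tree with root X ∈ G, let S = ((x_1,y_1),…,(x_n,y_n)) be any sample in X × Y with n_g > 0 for every g ∈ G, let H be a finite nonempty hypothesis class of functions X → Z, let ℓ : Z × Y → [0,1] be any bounded loss function, and let ε_n : G → (0,1) be any error rate function. Then the predictor f : X → Z output by the MGL-Tree algorithm run on these inputs satisfies L_S(f | g) ≤ inf_{h ∈ H} L_S(h | g) + ε_n(g) for all g ∈ G. -/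
open MeasureTheory ProbabilityTheory

open scoped Classical in
noncomputable def numIn {X Y : Type*} {n : ℕ} (S : Fin n → X × Y) (g : Set X) : ℕ :=
  (Finset.univ.filter (fun i => (S i).1 ∈ g)).card

open scoped Classical in
noncomputable def empRisk {X Y Z : Type*} {n : ℕ} (ℓ : Z → Y → ℝ) (S : Fin n → X × Y)
    (f : X → Z) (g : Set X) : ℝ :=
  (∑ i ∈ Finset.univ.filter (fun i => (S i).1 ∈ g), ℓ (f (S i).1) (S i).2) /
    (numIn S g : ℝ)

/-- A rooted hierarchical tree of groups over the input space `X`, with node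
index type `ι`.  The root is the whole space `X`, each non-root node is a
strict subset of its parent (one level deeper), and nodes at the same depth
are pairwise disjoint. -/
structure HTree (X : Type*) (ι : Type*) where
  set : ι → Set X
  root : ι
  par : ι → ι
  depth : ι → ℕ
  root_set : set root = Set.univ
  root_depth : depth root = 0
  depth_par : ∀ g, g ≠ root → depth g = depth (par g) + 1
  ssubset_par : ∀ g, g ≠ root → set g ⊂ set (par g)
  disj : ∀ g g', g ≠ g' → depth g = depth g' → set g ∩ set g' = ∅

open scoped Classical in
/-- The working predictors `f^g` computed by the MGL-Tree algorithm: the root's working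
predictor is the empirical minimizer `ĥ^X`; visiting nodes in breadth-first order (so that
each node is visited after its parent, whose working predictor describes the behavior of the
current decision tree `f_old` on the node), node `g`'s working predictor is set to `ĥ^g` if
`L_S(f_old | g) - L_S(ĥ^g | g) ≥ ε_n(g)` and is inherited from the parent otherwise. -/
noncomputable def workPred {X Y Z ι : Type*} (T : HTree X ι) (hhat : ι → X → Z)
    (ℓ : Z → Y → ℝ) {n : ℕ} (S : Fin n → X × Y) (ε : ι → ℝ) (g : ι) : X → Z :=
  if h : g = T.root then hhat T.root
  else
    let p := workPred T hhat ℓ S ε (T.par g)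
    if empRisk ℓ S p (T.set g) - empRisk ℓ S (hhat g) (T.set g) ≥ ε g then hhat g else p
termination_by T.depth g
decreasing_by
  have := T.depth_par g h
  omega

open scoped Classical in
/-- The deepest node of the tree `T` containing the point `x`. -/
noncomputable def deepestNode {X ι : Type*} [Fintype ι] (T : HTree X ι) (x : X) : ι :=
  ((Finset.univ.filter (fun g => x ∈ T.set g)).exists_max_image T.depth
    ⟨T.root, by simp [T.root_set]⟩).choose

/-- The final decision tree predictor output by MGL-Tree: on input `x`, predict with the
working predictor of the deepest node of the tree containing `x`. -/
noncomputable def treePredict {X Z ι : Type*} [Fintype ι] (T : HTree X ι)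
    (W : ι → X → Z) : X → Z :=
  fun x => W (deepestNode T x) x

/-!
Write `w g` for the working predictor of node `g`. By construction `w g` is within `ε g` of
`hhat g` on `g`, and a child `c` only replaces its parent's predictor when this lowers the loss
on `c` by at least `ε c > 0`, so `w c` never does worse on `c` than `w (par c)`. The output agrees with `w g` on the sample
points whose deepest node is `g`, and the children of `g` partition the remaining points of `g`;
an induction from the leaves upwards therefore shows that the total loss of the output on `g` is
at most that of `w g`.
-/

open scoped Classical

open Finset

namespace HTree

variable {X ι : Type*} (T : HTree X ι)

lemma ne_root_of_depth_ne_zero {g : ι} (hg : T.depth g ≠ 0) : g ≠ T.root :=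
  fun h => hg (h ▸ T.root_depth)

lemma depth_iterate_par {g : ι} {k : ℕ} (hk : k ≤ T.depth g) :
    T.depth (T.par^[k] g) = T.depth g - k := by
  induction k with
  | zero => rfl
  | succ k ih =>
    have hd := ih (by omega)
    have := T.depth_par _ (T.ne_root_of_depth_ne_zero (g := T.par^[k] g) (by omega))
    rw [Function.iterate_succ_apply']
    omega

lemma set_subset_set_iterate_par {g : ι} {k : ℕ} (hk : k ≤ T.depth g) :
    T.set g ⊆ T.set (T.par^[k] g) := by
  induction k with
  | zero => exact subset_rfl
  | succ k ih =>
    have hne : T.par^[k] g ≠ T.root :=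
      T.ne_root_of_depth_ne_zero (by rw [T.depth_iterate_par (by omega)]; omega)
    rw [Function.iterate_succ_apply']
    exact (ih (by omega)).trans (T.ssubset_par _ hne).subset

lemma eq_of_mem_of_depth_eq {g g' : ι} {x : X} (hx : x ∈ T.set g) (hx' : x ∈ T.set g')
    (hd : T.depth g = T.depth g') : g = g' := by
  by_contra hne
  exact Set.eq_empty_iff_forall_notMem.mp (T.disj g g' hne hd) x ⟨hx, hx'⟩

variable [Fintype ι]

noncomputable def children (g : ι) : Finset ι := {c | c ≠ T.root ∧ T.par c = g}

lemma mem_children {c g : ι} : c ∈ T.children g ↔ c ≠ T.root ∧ T.par c = g := by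
  simp [children]

lemma depth_of_mem_children {c g : ι} (hc : c ∈ T.children g) :
    T.depth c = T.depth g + 1 := by
  obtain ⟨hne, rfl⟩ := T.mem_children.mp hc
  exact T.depth_par c hne

lemma set_subset_of_mem_children {c g : ι} (hc : c ∈ T.children g) : T.set c ⊆ T.set g := by
  obtain ⟨hne, rfl⟩ := T.mem_children.mp hc
  exact (T.ssubset_par c hne).subset

lemma exists_mem_children_of_depth_lt {g d : ι} {x : X} (hg : x ∈ T.set g)
    (hd : x ∈ T.set d) (hlt : T.depth g < T.depth d) : ∃ c ∈ T.children g, x ∈ T.set c := by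
  set c := T.par^[T.depth d - T.depth g - 1] d
  have hdc : T.depth c = T.depth g + 1 := by rw [T.depth_iterate_par (by omega)]; omega
  have hne : c ≠ T.root := T.ne_root_of_depth_ne_zero (by omega)
  have hxc : x ∈ T.set c := T.set_subset_set_iterate_par (by omega) hd
  have hpar : T.par c = g :=
    T.eq_of_mem_of_depth_eq ((T.ssubset_par c hne).subset hxc) hg (by
      have := T.depth_par c hne
      omega)
  exact ⟨c, T.mem_children.mpr ⟨hne, hpar⟩, hxc⟩

lemma mem_set_deepestNode (x : X) : x ∈ T.set (deepestNode T x) := by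
  unfold deepestNode
  generalize_proofs h
  exact (mem_filter.mp h.choose_spec.1).2

lemma depth_le_depth_deepestNode {g : ι} {x : X} (hx : x ∈ T.set g) :
    T.depth g ≤ T.depth (deepestNode T x) := by
  unfold deepestNode
  generalize_proofs h
  exact h.choose_spec.2 g (mem_filter.mpr ⟨mem_univ g, hx⟩)

lemma deepestNode_ne_iff {g : ι} {x : X} (hx : x ∈ T.set g) :
    deepestNode T x ≠ g ↔ ∃ c ∈ T.children g, x ∈ T.set c := by
  constructor
  · intro hne
    refine T.exists_mem_children_of_depth_lt hx (T.mem_set_deepestNode x)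
      (lt_of_le_of_ne (T.depth_le_depth_deepestNode hx) fun hd => hne ?_)
    exact (T.eq_of_mem_of_depth_eq hx (T.mem_set_deepestNode x) hd).symm
  · rintro ⟨c, hc, hxc⟩ rfl
    have := T.depth_le_depth_deepestNode hxc
    rw [T.depth_of_mem_children hc] at this
    omega

end HTree

section EmpiricalRisk

variable {X Y Z : Type*} {n : ℕ} (ℓ : Z → Y → ℝ) (S : Fin n → X × Y)

noncomputable def lossSum (f : X → Z) (g : Set X) : ℝ :=
  ∑ i ∈ univ.filter (fun i => (S i).1 ∈ g), ℓ (f (S i).1) (S i).2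

lemma lossSum_le_lossSum_of_empRisk_le {f₁ f₂ : X → Z} {g : Set X}
    (h : empRisk ℓ S f₁ g ≤ empRisk ℓ S f₂ g) : lossSum ℓ S f₁ g ≤ lossSum ℓ S f₂ g := by
  rcases (numIn S g).eq_zero_or_pos with h0 | hpos
  · have hempty : univ.filter (fun i => (S i).1 ∈ g) = ∅ := card_eq_zero.mp h0
    simp [lossSum, hempty]
  · exact (div_le_div_iff_of_pos_right (by exact_mod_cast hpos)).mp h

lemma empRisk_le_empRisk_of_lossSum_le {f₁ f₂ : X → Z} {g : Set X}
    (h : lossSum ℓ S f₁ g ≤ lossSum ℓ S f₂ g) : empRisk ℓ S f₁ g ≤ empRisk ℓ S f₂ g :=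
  div_le_div_of_nonneg_right h (Nat.cast_nonneg _)

lemma lossSum_eq_add_sum_children {ι : Type*} [Fintype ι] (T : HTree X ι) (f : X → Z) (g : ι) :
    lossSum ℓ S f (T.set g) =
      ∑ i ∈ univ.filter (fun i => deepestNode T (S i).1 = g), ℓ (f (S i).1) (S i).2 +
        ∑ c ∈ T.children g, lossSum ℓ S f (T.set c) := by
  have hdisj : (T.children g : Set ι).PairwiseDisjoint
      fun c => univ.filter (fun i => (S i).1 ∈ T.set c) :=
    fun c hc c' hc' hne => disjoint_filter.mpr fun i _ hi hi' => hne <|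
      T.eq_of_mem_of_depth_eq hi hi' <| by
        rw [T.depth_of_mem_children hc, T.depth_of_mem_children hc']
  unfold lossSum
  rw [← sum_filter_add_sum_filter_not _ (fun i => deepestNode T (S i).1 = g),
    filter_filter, filter_filter, ← sum_biUnion hdisj]
  congr 2 <;> ext i
  · simp only [mem_filter, mem_univ, true_and, and_iff_right_iff_imp]
    rintro rfl
    exact T.mem_set_deepestNode _
  · simp only [mem_filter, mem_univ, true_and, mem_biUnion]
    constructor
    · rintro ⟨hx, hne⟩
      exact (T.deepestNode_ne_iff hx).mp hne
    · rintro ⟨c, hc, hxc⟩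
      have hx := T.set_subset_of_mem_children hc hxc
      exact ⟨hx, (T.deepestNode_ne_iff hx).mpr ⟨c, hc, hxc⟩⟩

end EmpiricalRisk

section MGLTree

variable {X Y Z ι : Type*} (T : HTree X ι) (hhat : ι → X → Z) (ℓ : Z → Y → ℝ) {n : ℕ}
  (S : Fin n → X × Y) (ε : ι → ℝ)

lemma workPred_root : workPred T hhat ℓ S ε T.root = hhat T.root := by
  rw [workPred, dif_pos rfl]

lemma workPred_of_ne_root {g : ι} (hg : g ≠ T.root) :
    workPred T hhat ℓ S ε g =
      if empRisk ℓ S (workPred T hhat ℓ S ε (T.par g)) (T.set g) -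
          empRisk ℓ S (hhat g) (T.set g) ≥ ε g then hhat g
      else workPred T hhat ℓ S ε (T.par g) := by
  rw [workPred, dif_neg hg]

lemma empRisk_workPred_le_par {c : ι} (hc : c ≠ T.root) (hε : 0 ≤ ε c) :
    empRisk ℓ S (workPred T hhat ℓ S ε c) (T.set c) ≤
      empRisk ℓ S (workPred T hhat ℓ S ε (T.par c)) (T.set c) := by
  rw [workPred_of_ne_root T hhat ℓ S ε hc]
  split_ifs with h
  · linarith
  · exact le_rfl

lemma empRisk_workPred_le (g : ι) (hε : 0 ≤ ε g) :
    empRisk ℓ S (workPred T hhat ℓ S ε g) (T.set g) ≤ empRisk ℓ S (hhat g) (T.set g) + ε g := by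
  by_cases hg : g = T.root
  · subst hg
    rw [workPred_root]
    linarith
  · rw [workPred_of_ne_root T hhat ℓ S ε hg]
    split_ifs with h
    · linarith
    · linarith [not_le.mp h]

lemma lossSum_treePredict_le [Fintype ι] (hε : ∀ g, 0 ≤ ε g) (g : ι) :
    lossSum ℓ S (treePredict T (workPred T hhat ℓ S ε)) (T.set g) ≤
      lossSum ℓ S (workPred T hhat ℓ S ε g) (T.set g) := by
  rw [lossSum_eq_add_sum_children ℓ S T, lossSum_eq_add_sum_children ℓ S T]
  have h_deepest : ∀ i ∈ univ.filter (fun i => deepestNode T (S i).1 = g),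
      ℓ (treePredict T (workPred T hhat ℓ S ε) (S i).1) (S i).2 =
        ℓ (workPred T hhat ℓ S ε g (S i).1) (S i).2 := fun i hi => by
    rw [treePredict, (mem_filter.mp hi).2]
  refine add_le_add (sum_congr rfl h_deepest).le (sum_le_sum fun c hc => ?_)
  obtain ⟨hne, hpar⟩ := T.mem_children.mp hc
  calc lossSum ℓ S (treePredict T (workPred T hhat ℓ S ε)) (T.set c)
      ≤ lossSum ℓ S (workPred T hhat ℓ S ε c) (T.set c) := lossSum_treePredict_le hε c
    _ ≤ lossSum ℓ S (workPred T hhat ℓ S ε g) (T.set c) := by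
      rw [← hpar]
      exact lossSum_le_lossSum_of_empRisk_le ℓ S
        (empRisk_workPred_le_par T hhat ℓ S ε hne (hε c))
termination_by univ.sup T.depth - T.depth g
decreasing_by
  have := T.depth_of_mem_children hc
  have := le_sup (f := T.depth) (mem_univ c)
  omega

end MGLTree

theorem mglTree_correctness_general {X Y Z ι : Type*} [Fintype ι]
    (T : HTree X ι)
    (ℓ : Z → Y → ℝ)
    {n : ℕ} (S : Fin n → X × Y)
    (H : Finset (X → Z)) (hH : H.Nonempty)
    (ε : ι → ℝ) (hε : ∀ g, ε g ∈ Set.Ioo (0 : ℝ) 1)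
    (hhat : ι → X → Z)
    (hmin : ∀ g, ∀ h ∈ H, empRisk ℓ S (hhat g) (T.set g) ≤ empRisk ℓ S h (T.set g)) :
    ∀ g : ι,
      empRisk ℓ S (treePredict T (workPred T hhat ℓ S ε)) (T.set g) ≤
        H.inf' hH (fun h => empRisk ℓ S h (T.set g)) + ε g := by
  have hε_nonneg : ∀ g, 0 ≤ ε g := fun g => (hε g).1.le
  intro g
  calc empRisk ℓ S (treePredict T (workPred T hhat ℓ S ε)) (T.set g)
      ≤ empRisk ℓ S (workPred T hhat ℓ S ε g) (T.set g) :=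
        empRisk_le_empRisk_of_lossSum_le ℓ S (lossSum_treePredict_le T hhat ℓ S ε hε_nonneg g)
    _ ≤ empRisk ℓ S (hhat g) (T.set g) + ε g := empRisk_workPred_le T hhat ℓ S ε g (hε_nonneg g)
    _ ≤ H.inf' hH (fun h => empRisk ℓ S h (T.set g)) + ε g := by
      gcongr
      exact le_inf' hH _ (hmin g)

/-- Correctness of MGL-Tree: for any sample, any hierarchical tree of
groups each containing at least one sample point, any finite nonempty hypothesis class,
any bounded loss, and any error-rate function `ε : G → (0,1)`, the predictor output by
MGL-Tree has group-conditional empirical risk within `ε_n(g)` of the best hypothesis in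
`H`, simultaneously for every group `g` in the tree. -/
theorem mglTree_correctness {X Y Z ι : Type*} [Fintype ι]
    (T : HTree X ι)
    (ℓ : Z → Y → ℝ) (hℓ : ∀ z y, ℓ z y ∈ Set.Icc (0 : ℝ) 1)
    {n : ℕ} (S : Fin n → X × Y)
    (hpos : ∀ g : ι, 0 < numIn S (T.set g))
    (H : Finset (X → Z)) (hH : H.Nonempty)
    (ε : ι → ℝ) (hε : ∀ g, ε g ∈ Set.Ioo (0 : ℝ) 1)
    (hhat : ι → X → Z)
    (hmem : ∀ g, hhat g ∈ H)
    (hmin : ∀ g, ∀ h ∈ H, empRisk ℓ S (hhat g) (T.set g) ≤ empRisk ℓ S h (T.set g)) :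
    ∀ g : ι,
      empRisk ℓ S (treePredict T (workPred T hhat ℓ S ε)) (T.set g) ≤
        H.inf' hH (fun h => empRisk ℓ S h (T.set g)) + ε g :=
  mglTree_correctness_general T ℓ S H hH ε hε hhat hmin
end

section
/- Consider any step of the MGL-Tree algorithm at which the breadth-first search is considering a node g ∈ G, and let f_old denote the decision tree maintained by the algorithm at this step before any update at g. For each g' ∈ G let ĥ^{g'} ∈ argmin_{h ∈ H} L_S(h | g'). Then there exists a group g' ∈ G with g ⊂ g' that has already been visited by the algorithm (possibly the root X) such that f_old(x) = ĥ^{g'}(x) for all x ∈ g. -/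
open MeasureTheory ProbabilityTheory

private lemma workPred_eq_hhat {X Y Z ι : Type*} (T : HTree X ι) (hhat : ι → X → Z)
    (ℓ : Z → Y → ℝ) {n : ℕ} (S : Fin n → X × Y) (ε : ι → ℝ) (p : ι) :
    ∃ g' : ι, T.set p ⊆ T.set g' ∧ T.depth g' ≤ T.depth p ∧
      workPred T hhat ℓ S ε p = hhat g' := by
  generalize hd : T.depth p = d
  induction d using Nat.strong_induction_on generalizing p with
  | _ d ih =>
    subst hd
    by_cases h : p = T.root
    · exact ⟨p, subset_rfl, le_rfl, by rw [workPred]; simp [h]⟩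
    · rw [workPred]
      simp only [h, dite_false]
      split
      · exact ⟨p, subset_rfl, le_rfl, rfl⟩
      · have hdp := T.depth_par p h
        obtain ⟨g', hsub, hle, heq⟩ := ih (T.depth (T.par p)) (by omega) (T.par p) rfl
        exact ⟨g', (T.ssubset_par p h).subset.trans hsub, by omega, heq⟩

/-- Behavior of `f_old`: at the step of MGL-Tree's breadth-first search
considering a (non-root) node `g`, the current decision tree `f_old` — whose behavior on `g`
is given by the working predictor of `g`'s parent — agrees on all of `g` with the empirical
group-conditional risk minimizer `ĥ^{g'}` of some already-visited (i.e. strictly shallower)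
strict superset `g'` of `g`, possibly the root. -/
theorem mglTree_fold_behavior {X Y Z ι : Type*} [Fintype ι]
    (T : HTree X ι)
    (ℓ : Z → Y → ℝ) (hℓ : ∀ z y, ℓ z y ∈ Set.Icc (0 : ℝ) 1)
    {n : ℕ} (S : Fin n → X × Y)
    (hpos : ∀ g : ι, 0 < numIn S (T.set g))
    (H : Finset (X → Z)) (hH : H.Nonempty)
    (ε : ι → ℝ)
    (hhat : ι → X → Z)
    (hmem : ∀ g, hhat g ∈ H)
    (hmin : ∀ g, ∀ h ∈ H, empRisk ℓ S (hhat g) (T.set g) ≤ empRisk ℓ S h (T.set g))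
    (g : ι) (hg : g ≠ T.root) :
    ∃ g' : ι, T.set g ⊂ T.set g' ∧ T.depth g' < T.depth g ∧
      ∀ x ∈ T.set g, workPred T hhat ℓ S ε (T.par g) x = hhat g' x := by
  obtain ⟨g', hsub, hle, heq⟩ := workPred_eq_hhat T hhat ℓ S ε (T.par g)
  have hss := T.ssubset_par g hg
  have hdp := T.depth_par g hg
  exact ⟨g', hss.trans_subset hsub, by omega, fun x _ => by rw [heq]⟩
end

section
/- Let g* ⊆ ĝ be groups (subsets of X), let S be a finite sample in X × Y with n_{g*} > 0 and n_{ĝ} > 0, and let f_old, f, h* : X → Z be functions such that f(x) = h*(x) for all x ∈ g*, f(x) = f_old(x) for all x ∈ ĝ \ g*, and L_S(h* | g*) ≤ L_S(f_old | g*). Then L_S(f | ĝ) ≤ L_S(f_old | ĝ). In particular, if f_old satisfies L_S(f_old | ĝ) ≤ min_{h ∈ H} L_S(h | ĝ) + ε for a finite class H and ε > 0, then f also satisfies L_S(f | ĝ) ≤ min_{h ∈ H} L_S(h | ĝ) + ε. -/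
/-- monotonicity of an update step, empirically: replacing `f_old` on
`g* ⊆ ĝ` by a predictor `h*` that is empirically no worse on `g*` does not increase the
group-conditional empirical risk on `ĝ`; in particular any empirical error bound on `ĝ`
relative to a finite class `H` is preserved. -/
theorem update_monotone_emp {X Y Z : Type*} {n : ℕ}
    (ℓ : Z → Y → ℝ) (hℓ : ∀ z y, ℓ z y ∈ Set.Icc (0 : ℝ) 1)
    (S : Fin n → X × Y)
    (gstar ghat : Set X) (hsub : gstar ⊆ ghat)
    (hpos1 : 0 < numIn S gstar) (hpos2 : 0 < numIn S ghat)
    (fold f hstar : X → Z)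
    (hf1 : ∀ x ∈ gstar, f x = hstar x)
    (hf2 : ∀ x ∈ ghat \ gstar, f x = fold x)
    (hbetter : empRisk ℓ S hstar gstar ≤ empRisk ℓ S fold gstar) :
    empRisk ℓ S f ghat ≤ empRisk ℓ S fold ghat ∧
      ∀ (H : Finset (X → Z)) (hH : H.Nonempty) (ε : ℝ), 0 < ε →
        empRisk ℓ S fold ghat ≤ H.inf' hH (fun h => empRisk ℓ S h ghat) + ε →
        empRisk ℓ S f ghat ≤ H.inf' hH (fun h => empRisk ℓ S h ghat) + ε := by
  classical
  have hmain : empRisk ℓ S f ghat ≤ empRisk ℓ S fold ghat := by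
    have hnpos : (0 : ℝ) < (numIn S gstar : ℝ) := by exact_mod_cast hpos1
    have hsum : (∑ i ∈ Finset.univ.filter (fun i => (S i).1 ∈ gstar),
        ℓ (hstar (S i).1) (S i).2) ≤
        ∑ i ∈ Finset.univ.filter (fun i => (S i).1 ∈ gstar),
        ℓ (fold (S i).1) (S i).2 := by
      have := div_le_div_iff₀ hnpos hnpos |>.mp hbetter
      nlinarith [this]
    unfold empRisk
    have hdpos : (0:ℝ) < (numIn S ghat : ℝ) := by exact_mod_cast hpos2
    apply div_le_div_of_nonneg_right ?_ hdpos.le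
    have hsplit : ∀ (F : X → Z),
        (∑ i ∈ Finset.univ.filter (fun i => (S i).1 ∈ ghat), ℓ (F (S i).1) (S i).2) =
        (∑ i ∈ Finset.univ.filter (fun i => (S i).1 ∈ ghat ∧ (S i).1 ∈ gstar),
          ℓ (F (S i).1) (S i).2) +
        ∑ i ∈ Finset.univ.filter (fun i => (S i).1 ∈ ghat ∧ (S i).1 ∉ gstar),
          ℓ (F (S i).1) (S i).2 := by
      intro F
      rw [← Finset.sum_filter_add_sum_filter_not
        (Finset.univ.filter (fun i => (S i).1 ∈ ghat)) (fun i => (S i).1 ∈ gstar)]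
      simp [Finset.filter_filter]
    rw [hsplit f, hsplit fold]
    have h1 : (∑ i ∈ Finset.univ.filter (fun i => (S i).1 ∈ ghat ∧ (S i).1 ∈ gstar),
        ℓ (f (S i).1) (S i).2) ≤
        ∑ i ∈ Finset.univ.filter (fun i => (S i).1 ∈ ghat ∧ (S i).1 ∈ gstar),
        ℓ (fold (S i).1) (S i).2 := by
      have heq : (Finset.univ.filter (fun i => (S i).1 ∈ ghat ∧ (S i).1 ∈ gstar)) =
          Finset.univ.filter (fun i => (S i).1 ∈ gstar) := by
        apply Finset.filter_congr
        intro i _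
        exact ⟨fun h => h.2, fun h => ⟨hsub h, h⟩⟩
      rw [heq]
      calc (∑ i ∈ Finset.univ.filter (fun i => (S i).1 ∈ gstar), ℓ (f (S i).1) (S i).2)
          = ∑ i ∈ Finset.univ.filter (fun i => (S i).1 ∈ gstar),
              ℓ (hstar (S i).1) (S i).2 := by
            apply Finset.sum_congr rfl
            intro i hi
            rw [hf1 _ (Finset.mem_filter.mp hi).2]
        _ ≤ _ := hsum
    have h2 : (∑ i ∈ Finset.univ.filter (fun i => (S i).1 ∈ ghat ∧ (S i).1 ∉ gstar),
        ℓ (f (S i).1) (S i).2) =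
        ∑ i ∈ Finset.univ.filter (fun i => (S i).1 ∈ ghat ∧ (S i).1 ∉ gstar),
        ℓ (fold (S i).1) (S i).2 := by
      apply Finset.sum_congr rfl
      intro i hi
      have := (Finset.mem_filter.mp hi).2
      rw [hf2 _ ⟨this.1, this.2⟩]
    linarith
  exact ⟨hmain, fun H hH ε _ hb => le_trans hmain hb⟩
end

section
/- Let D be a probability distribution on X × Y, let g ⊆ g' be measurable groups with P[x ∈ g] > 0 and P[x ∈ g'] > 0, let S be a finite sample with n_g > 0, and let f_old, f, ĥ : X → Z be measurable functions such that f(x) = ĥ(x) for all x ∈ g and f(x) = f_old(x) for all x ∈ g' \ g. Suppose L_S(f_old | g) − L_S(ĥ | g) ≥ ε for some ε > 0, and suppose |L_D(ĥ | g) − L_S(ĥ | g)| ≤ u and |L_D(f_old | g) − L_S(f_old | g)| ≤ u for some u ≥ 0. Then L_D(f | g') ≤ L_D(f_old | g') + (P[x ∈ g]/P[x ∈ g']) · (2u − ε). In particular, if ε ≥ 2u then L_D(f | g') ≤ L_D(f_old | g'). -/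
open MeasureTheory ProbabilityTheory

/-- Group-conditional (population) risk `L_D(f | g)`. -/
noncomputable def condRisk {X Y Z : Type*} [MeasurableSpace X] [MeasurableSpace Y]
    (D : Measure (X × Y)) (ℓ : Z → Y → ℝ) (f : X → Z) (g : Set X) : ℝ :=
  ∫ p, ℓ (f p.1) p.2 ∂(D[|{p : X × Y | p.1 ∈ g}])

lemma condRisk_eq {X Y Z : Type*} [MeasurableSpace X] [MeasurableSpace Y]
    (D : Measure (X × Y)) (ℓ : Z → Y → ℝ) (f : X → Z) (g : Set X) :
    condRisk D ℓ f g =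
      (D {p : X × Y | p.1 ∈ g}).toReal⁻¹ *
        ∫ p in {p : X × Y | p.1 ∈ g}, ℓ (f p.1) p.2 ∂D := by
  rw [condRisk, ProbabilityTheory.cond, integral_smul_measure, ENNReal.toReal_inv,
    smul_eq_mul]

/-- an update step that empirically improves significantly on `g` does not
hurt the population risk on any superset `g'`, given uniform-convergence slack `u`. -/
theorem update_monotone_pop {X Y Z : Type*}
    [MeasurableSpace X] [MeasurableSpace Y] [MeasurableSpace Z]
    (D : Measure (X × Y)) [IsProbabilityMeasure D]
    (ℓ : Z → Y → ℝ) (hℓ : ∀ z y, ℓ z y ∈ Set.Icc (0 : ℝ) 1)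
    (hℓm : Measurable (Function.uncurry ℓ))
    (g g' : Set X) (hsub : g ⊆ g')
    (hgm : MeasurableSet g) (hg'm : MeasurableSet g')
    (hgpos : 0 < D {p : X × Y | p.1 ∈ g}) (hg'pos : 0 < D {p : X × Y | p.1 ∈ g'})
    {n : ℕ} (S : Fin n → X × Y) (hn : 0 < numIn S g)
    (fold f hhat : X → Z)
    (hfoldm : Measurable fold) (hfm : Measurable f) (hhatm : Measurable hhat)
    (hf1 : ∀ x ∈ g, f x = hhat x)
    (hf2 : ∀ x ∈ g' \ g, f x = fold x)
    (ε : ℝ) (hε : 0 < ε)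
    (hupd : empRisk ℓ S fold g - empRisk ℓ S hhat g ≥ ε)
    (u : ℝ) (hu : 0 ≤ u)
    (huc1 : |condRisk D ℓ hhat g - empRisk ℓ S hhat g| ≤ u)
    (huc2 : |condRisk D ℓ fold g - empRisk ℓ S fold g| ≤ u) :
    condRisk D ℓ f g' ≤ condRisk D ℓ fold g' +
        ((D {p : X × Y | p.1 ∈ g}).toReal / (D {p : X × Y | p.1 ∈ g'}).toReal) *
          (2 * u - ε) ∧
      (2 * u ≤ ε → condRisk D ℓ f g' ≤ condRisk D ℓ fold g') := by
  set A : Set (X × Y) := {p : X × Y | p.1 ∈ g} with hA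
  set A' : Set (X × Y) := {p : X × Y | p.1 ∈ g'} with hA'
  have hAm : MeasurableSet A := measurable_fst hgm
  have hA'm : MeasurableSet A' := measurable_fst hg'm
  have hAsub : A ⊆ A' := fun p hp => hsub hp
  have ha : 0 < (D A).toReal := ENNReal.toReal_pos hgpos.ne' (measure_ne_top D A)
  have ha' : 0 < (D A').toReal := ENNReal.toReal_pos hg'pos.ne' (measure_ne_top D A')
  -- integrability
  have hint : ∀ (h : X → Z), Measurable h → Integrable (fun p : X × Y => ℓ (h p.1) p.2) D := by
    intro h hm
    refine Integrable.mono' (integrable_const 1) ?_ ?_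
    · exact (hℓm.comp ((hm.comp measurable_fst).prodMk measurable_snd)).aestronglyMeasurable
    · filter_upwards with p
      rw [Real.norm_eq_abs, abs_le]
      exact ⟨by linarith [(hℓ (h p.1) p.2).1], (hℓ (h p.1) p.2).2⟩
  -- set-integral splitting
  have hsplit : ∀ (h : X → Z), Measurable h →
      ∫ p in A', ℓ (h p.1) p.2 ∂D =
        (∫ p in A, ℓ (h p.1) p.2 ∂D) + ∫ p in A' \ A, ℓ (h p.1) p.2 ∂D := by
    intro h hm
    rw [← setIntegral_union (Set.disjoint_sdiff_right) (hA'm.diff hAm)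
      ((hint h hm).integrableOn) ((hint h hm).integrableOn),
      Set.union_diff_cancel hAsub]
  have hfA : ∫ p in A, ℓ (f p.1) p.2 ∂D = ∫ p in A, ℓ (hhat p.1) p.2 ∂D := by
    refine setIntegral_congr_fun hAm fun p hp => ?_
    rw [hf1 p.1 hp]
  have hfdiff : ∫ p in A' \ A, ℓ (f p.1) p.2 ∂D = ∫ p in A' \ A, ℓ (fold p.1) p.2 ∂D := by
    refine setIntegral_congr_fun (hA'm.diff hAm) fun p hp => ?_
    rw [hf2 p.1 ⟨hp.1, hp.2⟩]
  -- key identity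
  have hkey : condRisk D ℓ f g' = condRisk D ℓ fold g' +
      ((D A).toReal / (D A').toReal) * (condRisk D ℓ hhat g - condRisk D ℓ fold g) := by
    rw [condRisk_eq, condRisk_eq, condRisk_eq, condRisk_eq, ← hA, ← hA',
      hsplit f hfm, hsplit fold hfoldm, hfA, hfdiff]
    field_simp
    ring
  have hbd : condRisk D ℓ hhat g - condRisk D ℓ fold g ≤ 2 * u - ε := by
    have h1 := abs_le.mp huc1
    have h2 := abs_le.mp huc2
    linarith
  have hratio : 0 ≤ (D A).toReal / (D A').toReal := by positivity
  constructor
  · rw [hkey]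
    have := mul_le_mul_of_nonneg_left hbd hratio
    linarith
  · intro h2u
    rw [hkey]
    have hle : condRisk D ℓ hhat g - condRisk D ℓ fold g ≤ 0 := le_trans hbd (by linarith)
    nlinarith
end

section
/- Let D be a probability distribution on X × Y, let H be a nonempty class of measurable hypotheses X → Z, let g_1, …, g_k be pairwise disjoint measurable groups with P[x ∈ g_i] > 0 for each i, and let f : X → Z be measurable. Suppose that for each i there is ε_i ≥ 0 with L_D(f | g_i) ≤ inf_{h ∈ H} L_D(h | g_i) + ε_i. Then L_D(f | ∪_{i=1}^k g_i) ≤ inf_{h ∈ H} L_D(h | ∪_{i=1}^k g_i) + Σ_{i=1}^k ( P[x ∈ g_i] / Σ_{j=1}^k P[x ∈ g_j] ) · ε_i. -/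
/-!
Conditioning on a disjoint union of groups is a convex combination of conditioning on the
groups, with weights proportional to their probabilities. Hence the risk of `f` on the union
is the weighted average of its group risks, each within `ε i` of the group's best risk, and a
weighted average of group-wise infima is at most the infimum of the weighted averages.
-/

open MeasureTheory ProbabilityTheory

namespace ProbabilityTheory

variable {Ω : Type*} [MeasurableSpace Ω] {μ : Measure Ω}

theorem integral_cond_eq_inv_mul_setIntegral (s : Set Ω) (φ : Ω → ℝ) :
    ∫ x, φ x ∂μ[|s] = (μ s).toReal⁻¹ * ∫ x in s, φ x ∂μ := by
  rw [cond, integral_smul_measure, ENNReal.toReal_inv, smul_eq_mul]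

theorem measureReal_mul_integral_cond [IsFiniteMeasure μ] (s : Set Ω) (φ : Ω → ℝ) :
    (μ s).toReal * ∫ x, φ x ∂μ[|s] = ∫ x in s, φ x ∂μ := by
  rcases eq_or_ne (μ s) 0 with hs | hs
  · simp [hs]
  · rw [integral_cond_eq_inv_mul_setIntegral, ← mul_assoc,
      mul_inv_cancel₀ (ENNReal.toReal_ne_zero.2 ⟨hs, measure_ne_top μ s⟩), one_mul]

theorem integral_cond_iUnion {ι : Type*} [Fintype ι] [IsFiniteMeasure μ] {s : ι → Set Ω}
    (hs : ∀ i, MeasurableSet (s i)) (hd : Pairwise (Function.onFun Disjoint s))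
    {φ : Ω → ℝ} (hφ : Integrable φ μ) :
    ∫ x, φ x ∂μ[|⋃ i, s i] =
      ∑ i, ((μ (s i)).toReal / ∑ j, (μ (s j)).toReal) * ∫ x, φ x ∂μ[|s i] := by
  have hμU : (μ (⋃ i, s i)).toReal = ∑ j, (μ (s j)).toReal := by
    rw [measure_iUnion hd hs, tsum_fintype, ENNReal.toReal_sum fun i _ => measure_ne_top μ _]
  simp_rw [integral_cond_eq_inv_mul_setIntegral (⋃ i, s i), integral_iUnion hs hd hφ.integrableOn,
    tsum_fintype, hμU, Finset.mul_sum, div_eq_inv_mul, mul_assoc, measureReal_mul_integral_cond]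

end ProbabilityTheory

theorem Finset.sum_mul_ciInf_le {ι κ : Type*} [Nonempty κ] (s : Finset ι) {c : ι → ℝ}
    (hc : ∀ i ∈ s, 0 ≤ c i) {a : ι → κ → ℝ} (ha : ∀ i, BddBelow (Set.range (a i))) :
    ∑ i ∈ s, c i * ⨅ j, a i j ≤ ⨅ j, ∑ i ∈ s, c i * a i j :=
  le_ciInf fun j => Finset.sum_le_sum fun i hi =>
    mul_le_mul_of_nonneg_left (ciInf_le (ha i) j) (hc i hi)

section condRisk

variable {X Y Z : Type*} [MeasurableSpace X] [MeasurableSpace Y]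
  {D : Measure (X × Y)} {ℓ : Z → Y → ℝ}

theorem condRisk_nonneg (hℓ : ∀ z y, 0 ≤ ℓ z y) (f : X → Z) (g : Set X) :
    0 ≤ condRisk D ℓ f g :=
  integral_nonneg fun _ => hℓ _ _

theorem integrable_loss [MeasurableSpace Z] [IsFiniteMeasure D]
    (hℓ : ∀ z y, ℓ z y ∈ Set.Icc (0 : ℝ) 1)
    (hℓm : Measurable (Function.uncurry ℓ)) {f : X → Z} (hf : Measurable f) :
    Integrable (fun p : X × Y => ℓ (f p.1) p.2) D := by
  refine (integrable_const (1 : ℝ)).mono'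
    (hℓm.comp ((hf.comp measurable_fst).prodMk measurable_snd)).aestronglyMeasurable
    (ae_of_all _ fun p => ?_)
  rw [Real.norm_of_nonneg (hℓ _ _).1]
  exact (hℓ _ _).2

theorem condRisk_iUnion [IsFiniteMeasure D] {ι : Type*} [Fintype ι] {g : ι → Set X}
    (hgm : ∀ i, MeasurableSet (g i)) (hd : Pairwise (Function.onFun Disjoint g)) {f : X → Z}
    (hint : Integrable (fun p : X × Y => ℓ (f p.1) p.2) D) :
    condRisk D ℓ f (⋃ i, g i) =
      ∑ i, ((D {p : X × Y | p.1 ∈ g i}).toReal / ∑ j, (D {p : X × Y | p.1 ∈ g j}).toReal) *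
        condRisk D ℓ f (g i) := by
  have hU : {p : X × Y | p.1 ∈ ⋃ i, g i} = ⋃ i, {p : X × Y | p.1 ∈ g i} := by
    ext p; simp
  rw [condRisk, hU]
  exact integral_cond_iUnion (fun i => measurable_fst (hgm i))
    (fun i j hij => (hd hij).preimage Prod.fst) hint

end condRisk

theorem excess_error_union_general {X Y Z : Type*}
    [MeasurableSpace X] [MeasurableSpace Y] [MeasurableSpace Z]
    (D : Measure (X × Y)) [IsProbabilityMeasure D]
    (ℓ : Z → Y → ℝ) (hℓ : ∀ z y, ℓ z y ∈ Set.Icc (0 : ℝ) 1)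
    (hℓm : Measurable (Function.uncurry ℓ))
    (H : Set (X → Z)) (hH : H.Nonempty) (hHm : ∀ h ∈ H, Measurable h)
    {k : ℕ}
    (g : Fin k → Set X) (hgm : ∀ i, MeasurableSet (g i))
    (hdisj : ∀ i j, i ≠ j → g i ∩ g j = ∅)
    (f : X → Z) (hf : Measurable f)
    (ε : Fin k → ℝ)
    (hbound : ∀ i, condRisk D ℓ f (g i) ≤
      (⨅ h : H, condRisk D ℓ (h : X → Z) (g i)) + ε i) :
    condRisk D ℓ f (⋃ i, g i) ≤
      (⨅ h : H, condRisk D ℓ (h : X → Z) (⋃ i, g i)) +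
        ∑ i, ((D {p : X × Y | p.1 ∈ g i}).toReal /
            (∑ j, (D {p : X × Y | p.1 ∈ g j}).toReal)) * ε i := by
  set c : Fin k → ℝ := fun i =>
    (D {p : X × Y | p.1 ∈ g i}).toReal / ∑ j, (D {p : X × Y | p.1 ∈ g j}).toReal
  have hc : ∀ i ∈ Finset.univ, 0 ≤ c i := fun i _ => by positivity
  have hsplit : ∀ h : X → Z, Measurable h →
      condRisk D ℓ h (⋃ i, g i) = ∑ i, c i * condRisk D ℓ h (g i) := fun h hh =>
    condRisk_iUnion hgm (fun i j hij => Set.disjoint_iff_inter_eq_empty.2 (hdisj i j hij))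
      (integrable_loss hℓ hℓm hh)
  have hbdd : ∀ i, BddBelow (Set.range fun h : H => condRisk D ℓ (h : X → Z) (g i)) :=
    fun i => ⟨0, Set.forall_mem_range.2 fun _ => condRisk_nonneg (fun z y => (hℓ z y).1) _ _⟩
  have : Nonempty H := hH.to_subtype
  calc condRisk D ℓ f (⋃ i, g i) = ∑ i, c i * condRisk D ℓ f (g i) := hsplit f hf
    _ ≤ ∑ i, c i * ((⨅ h : H, condRisk D ℓ (h : X → Z) (g i)) + ε i) :=
      Finset.sum_le_sum fun i hi => mul_le_mul_of_nonneg_left (hbound i) (hc i hi)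
    _ = ∑ i, c i * (⨅ h : H, condRisk D ℓ (h : X → Z) (g i)) + ∑ i, c i * ε i := by
      simp only [mul_add, Finset.sum_add_distrib]
    _ ≤ (⨅ h : H, ∑ i, c i * condRisk D ℓ (h : X → Z) (g i)) + ∑ i, c i * ε i := by
      gcongr
      exact Finset.univ.sum_mul_ciInf_le hc hbdd
    _ = (⨅ h : H, condRisk D ℓ (h : X → Z) (⋃ i, g i)) + ∑ i, c i * ε i := by
      rw [iInf_congr fun h : H => (hsplit h (hHm h h.2)).symm]

/-- group-wise excess error bounds on disjoint groups combine into an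
excess error bound on their union, with probability-proportional weights. -/
theorem excess_error_union {X Y Z : Type*}
    [MeasurableSpace X] [MeasurableSpace Y] [MeasurableSpace Z]
    (D : Measure (X × Y)) [IsProbabilityMeasure D]
    (ℓ : Z → Y → ℝ) (hℓ : ∀ z y, ℓ z y ∈ Set.Icc (0 : ℝ) 1)
    (hℓm : Measurable (Function.uncurry ℓ))
    (H : Set (X → Z)) (hH : H.Nonempty) (hHm : ∀ h ∈ H, Measurable h)
    {k : ℕ} (hk : 0 < k)
    (g : Fin k → Set X) (hgm : ∀ i, MeasurableSet (g i))
    (hdisj : ∀ i j, i ≠ j → g i ∩ g j = ∅)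
    (hpos : ∀ i, 0 < D {p : X × Y | p.1 ∈ g i})
    (f : X → Z) (hf : Measurable f)
    (ε : Fin k → ℝ) (hε : ∀ i, 0 ≤ ε i)
    (hbound : ∀ i, condRisk D ℓ f (g i) ≤
      (⨅ h : H, condRisk D ℓ (h : X → Z) (g i)) + ε i) :
    condRisk D ℓ f (⋃ i, g i) ≤
      (⨅ h : H, condRisk D ℓ (h : X → Z) (⋃ i, g i)) +
        ∑ i, ((D {p : X × Y | p.1 ∈ g i}).toReal /
            (∑ j, (D {p : X × Y | p.1 ∈ g j}).toReal)) * ε i :=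
  excess_error_union_general D ℓ hℓ hℓm H hH hHm g hgm hdisj f hf ε hbound
end
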